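/- arXiv:1407.4553 — 2 statements merged into one kernel-verified Lean document; each statement's English description precedes it below -/
import Mathlib

section
/- Let f be a germ of holomorphic diffeomorphism at 0 ∈ ℂ with f'(0) = e^{2πiλ}, λ ∈ ℝ \ ℚ. If f is formally linearizable and some iterate f^k (k ≥ 1) is analytically linearizable, i.e., there is a local biholomorphism h fixing 0 with h ∘ f^k ∘ h⁻¹ equal to multiplication by (f'(0))^k, then f itself is analytically linearizable. -/
/-!
If `h` linearizes `f^[k]`, i.e. `h ∘ f^[k] = μ^k h`, then the twisted Birkhoff sum
`H = ∑_{j<k} μ^(k-1-j) (h ∘ f^[j])` satisfies `H ∘ f = μ H`: composing with `f` shifts the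
sum by one step, and the term that falls off the end, `h ∘ f^[k]`, is exactly the `μ^k h` that
enters at the start. Each summand has derivative `μ^(k-1) h'(0)` at the fixed point, so
`H'(0) = k μ^(k-1) h'(0) ≠ 0` as soon as `μ ≠ 0`, and `H` linearizes `f`.
-/

/-- `twistedBirkhoffSum μ h f k z = ∑ j < k, μ ^ (k - 1 - j) * h (f^[j] z)`. -/
def twistedBirkhoffSum {α R : Type*} [Semiring R] (μ : R) (h : α → R) (f : α → α) :
    ℕ → α → R
  | 0, _ => 0
  | k + 1, z => μ * twistedBirkhoffSum μ h f k z + h (f^[k] z)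

section Algebra

variable {α R : Type*} [Semiring R] {f : α → α}

@[simp]
lemma twistedBirkhoffSum_zero (μ : R) (h : α → R) (z : α) :
    twistedBirkhoffSum μ h f 0 z = 0 := rfl

lemma twistedBirkhoffSum_succ (μ : R) (h : α → R) (k : ℕ) (z : α) :
    twistedBirkhoffSum μ h f (k + 1) z = μ * twistedBirkhoffSum μ h f k z + h (f^[k] z) := rfl

@[simp]
lemma twistedBirkhoffSum_one (μ : R) (h : α → R) : twistedBirkhoffSum μ h f 1 = h :=
  funext fun z => by simp [twistedBirkhoffSum_succ]

lemma twistedBirkhoffSum_apply_add (μ : R) (h : α → R) (k : ℕ) (z : α) :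
    twistedBirkhoffSum μ h f k (f z) + μ ^ k * h z =
      μ * twistedBirkhoffSum μ h f k z + h (f^[k] z) := by
  induction k with
  | zero => simp
  | succ k ih =>
    calc twistedBirkhoffSum μ h f (k + 1) (f z) + μ ^ (k + 1) * h z
        = μ * (twistedBirkhoffSum μ h f k (f z) + μ ^ k * h z) + h (f^[k + 1] z) := by
          rw [twistedBirkhoffSum_succ, ← Function.iterate_succ_apply, pow_succ', mul_add,
            mul_assoc]
          abel
      _ = μ * twistedBirkhoffSum μ h f (k + 1) z + h (f^[k + 1] z) := by
          rw [ih, twistedBirkhoffSum_succ]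

lemma twistedBirkhoffSum_apply_eq_mul [IsRightCancelAdd R] {μ : R} {h : α → R} {k : ℕ} {z : α}
    (hz : h (f^[k] z) = μ ^ k * h z) :
    twistedBirkhoffSum μ h f k (f z) = μ * twistedBirkhoffSum μ h f k z := by
  have := twistedBirkhoffSum_apply_add (f := f) μ h k z
  rwa [hz, add_left_inj] at this

lemma twistedBirkhoffSum_apply_eq_zero (μ : R) {h : α → R} {x : α}
    (hfx : f x = x) (hx : h x = 0) (k : ℕ) : twistedBirkhoffSum μ h f k x = 0 := by
  induction k with
  | zero => rfl
  | succ k ih => simp [twistedBirkhoffSum_succ, ih, Function.iterate_fixed hfx, hx]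

end Algebra

section Analysis

variable {𝕜 : Type*} [NontriviallyNormedField 𝕜] {f h : 𝕜 → 𝕜} {x : 𝕜}

lemma AnalyticAt.iterate {E : Type*} [NormedAddCommGroup E] [NormedSpace 𝕜 E]
    {g : E → E} {y : E} (hg : AnalyticAt 𝕜 g y) (hgy : g y = y) (n : ℕ) :
    AnalyticAt 𝕜 g^[n] y := by
  induction n with
  | zero => exact analyticAt_id
  | succ n ih =>
    rw [Function.iterate_succ']
    exact (Function.iterate_fixed hgy n ▸ hg).comp ih

lemma analyticAt_twistedBirkhoffSum (μ : 𝕜) (hf : AnalyticAt 𝕜 f x) (hfx : f x = x)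
    (hh : AnalyticAt 𝕜 h x) (k : ℕ) : AnalyticAt 𝕜 (twistedBirkhoffSum μ h f k) x := by
  induction k with
  | zero => exact analyticAt_const
  | succ k ih =>
    have hhk : AnalyticAt 𝕜 (h ∘ f^[k]) x :=
      (Function.iterate_fixed hfx k ▸ hh).comp (hf.iterate hfx k)
    exact (analyticAt_const.mul ih).add hhk

lemma hasDerivAt_twistedBirkhoffSum {μ h' : 𝕜} (hf : HasDerivAt f μ x) (hfx : f x = x)
    (hh : HasDerivAt h h' x) (k : ℕ) :
    HasDerivAt (twistedBirkhoffSum μ h f (k + 1)) ((k + 1) * μ ^ k * h') x := by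
  induction k with
  | zero => simpa using hh
  | succ k ih =>
    have hhk : HasDerivAt (h ∘ f^[k + 1]) (h' * μ ^ (k + 1)) x :=
      (Function.iterate_fixed hfx (k + 1) ▸ hh).comp x (hf.iterate x hfx (k + 1))
    refine ((ih.const_mul μ).add hhk).congr_deriv ?_
    push_cast
    ring

end Analysis

theorem nonresonant_iterate_linearizable_implies_linearizable_general
    (f : ℂ → ℂ) (hf : AnalyticAt ℂ f 0) (hf0 : f 0 = 0)
    (lam : ℝ)
    (hmult : deriv f 0 = Complex.exp (2 * Real.pi * Complex.I * (lam : ℂ)))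
    (k : ℕ) (hk : 1 ≤ k)
    (hlin : ∃ h : ℂ → ℂ, AnalyticAt ℂ h 0 ∧ h 0 = 0 ∧ deriv h 0 ≠ 0 ∧
      ∀ᶠ z in nhds (0 : ℂ), h (f^[k] z) = (deriv f 0) ^ k * h z) :
    ∃ h : ℂ → ℂ, AnalyticAt ℂ h 0 ∧ h 0 = 0 ∧ deriv h 0 ≠ 0 ∧
      ∀ᶠ z in nhds (0 : ℂ), h (f z) = deriv f 0 * h z := by
  obtain ⟨h, hh, hh0, hh', hconj⟩ := hlin
  obtain ⟨n, rfl⟩ : ∃ n, k = n + 1 := ⟨k - 1, by omega⟩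
  have hμ : deriv f 0 ≠ 0 := hmult ▸ Complex.exp_ne_zero _
  have hderiv := hasDerivAt_twistedBirkhoffSum hf.differentiableAt.hasDerivAt hf0
    hh.differentiableAt.hasDerivAt n
  refine ⟨twistedBirkhoffSum (deriv f 0) h f (n + 1),
    analyticAt_twistedBirkhoffSum _ hf hf0 hh _,
    twistedBirkhoffSum_apply_eq_zero _ hf0 hh0 _, ?_,
    hconj.mono fun z hz => twistedBirkhoffSum_apply_eq_mul hz⟩
  rw [hderiv.deriv]
  exact mul_ne_zero (mul_ne_zero (Nat.cast_add_one_ne_zero n) (pow_ne_zero _ hμ)) hh'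

/-- If a germ `f ∈ Diff(ℂ,0)` with non-resonant multiplier `f'(0) = e^{2πiλ}`,
`λ ∈ ℝ \ ℚ`, is formally linearizable (there are polynomial changes of coordinates
conjugating `f` to its linear part to every finite order) and some iterate `f^[k]`,
`k ≥ 1`, is analytically linearizable, then `f` itself is analytically linearizable. -/
theorem nonresonant_iterate_linearizable_implies_linearizable
    (f : ℂ → ℂ) (hf : AnalyticAt ℂ f 0) (hf0 : f 0 = 0)
    (lam : ℝ) (hirr : Irrational lam)
    (hmult : deriv f 0 = Complex.exp (2 * Real.pi * Complex.I * (lam : ℂ)))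
    (hformal : ∀ N : ℕ, ∃ P : Polynomial ℂ, P.coeff 0 = 0 ∧ P.coeff 1 = 1 ∧
      ∀ n ≤ N, iteratedDeriv n (fun z => P.eval (f z) - deriv f 0 * P.eval z) 0 = 0)
    (k : ℕ) (hk : 1 ≤ k)
    (hlin : ∃ h : ℂ → ℂ, AnalyticAt ℂ h 0 ∧ h 0 = 0 ∧ deriv h 0 ≠ 0 ∧
      ∀ᶠ z in nhds (0 : ℂ), h (f^[k] z) = (deriv f 0) ^ k * h z) :
    ∃ h : ℂ → ℂ, AnalyticAt ℂ h 0 ∧ h 0 = 0 ∧ deriv h 0 ≠ 0 ∧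
      ∀ᶠ z in nhds (0 : ℂ), h (f z) = deriv f 0 * h z :=
  nonresonant_iterate_linearizable_implies_linearizable_general f hf hf0 lam hmult k hk hlin
end

section
/- Every germ of holomorphic diffeomorphism f of (ℂ,0) with |f'(0)| ≠ 1 is analytically linearizable: there is a convergent power series h(z) = z + O(z²) with h ∘ f ∘ h⁻¹(z) = f'(0)·z (Koenigs' theorem). -/
/-!
Write `μ = f'(0)` and assume first `0 < |μ| < 1`. Pick `a` with `|μ| < a < 1` and `a² < |μ|`.
Since `f w - μ w = O(w²)`, on a small disc `f` contracts by the factor `a`, so the increments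
of the renormalized iterates `F_n z = f^[n] z / μ ^ n` are
`(f w - μ w) / μ ^ (n + 1) = O((a² / |μ|) ^ n)` with `w = f^[n] z`: the `F_n` converge uniformly
on the disc. The limit `h` is holomorphic
(Weierstrass), has `h'(0) = 1` like every approximant, and `h ∘ f = μ h` follows from
`F_n ∘ f = μ F_{n+1}`. If `|μ| > 1`, apply this to the analytic local inverse of `f`, whose
multiplier is `μ⁻¹`.
-/

open Filter Metric Set Topology

theorem AnalyticAt.isBigO_sub_sub_smul_deriv {𝕜 E : Type*} [NontriviallyNormedField 𝕜]
    [NormedAddCommGroup E] [NormedSpace 𝕜 E] {f : 𝕜 → E} {x : 𝕜} (hf : AnalyticAt 𝕜 f x) :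
    (fun y => f (x + y) - f x - y • deriv f x) =O[𝓝 0] fun y => ‖y‖ ^ 2 := by
  obtain ⟨p, hp⟩ := hf
  have hp2 : ∀ y, p.partialSum 2 y = f x + y • deriv f x := by
    intro y
    rw [FormalMultilinearSeries.partialSum, Finset.sum_range_succ, Finset.sum_range_one,
      hp.coeff_zero, FormalMultilinearSeries.apply_eq_pow_smul_coeff, hp.deriv, pow_one]
    rfl
  simpa only [hp2, sub_sub] using hp.isBigO_sub_partialSum_pow 2

theorem tendstoUniformlyOn_of_norm_sub_le {α F : Type*} [NormedAddCommGroup F] [CompleteSpace F]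
    {G : ℕ → α → F} {u : ℕ → ℝ} {s : Set α} (hu : Summable u)
    (hG : ∀ n, ∀ x ∈ s, ‖G (n + 1) x - G n x‖ ≤ u n) :
    TendstoUniformlyOn G (fun x => G 0 x + ∑' n, (G (n + 1) x - G n x)) atTop s := by
  have hsum := Metric.tendstoUniformlyOn_iff.1 (tendstoUniformlyOn_tsum_nat hu hG)
  refine Metric.tendstoUniformlyOn_iff.2 fun ε hε => (hsum ε hε).mono fun N hN x hx => ?_
  have hN' := hN x hx
  rwa [Finset.sum_range_sub (fun n => G n x), ← dist_add_left (G 0 x), add_sub_cancel] at hN'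

section NormIterate

variable {E : Type*} [SeminormedAddCommGroup E] {f : E → E} {r a : ℝ}

theorem mapsTo_ball_of_norm_le (hf : ∀ z ∈ ball (0 : E) r, ‖f z‖ ≤ a * ‖z‖) (ha : a ≤ 1) :
    MapsTo f (ball 0 r) (ball 0 r) := fun z hz => by
  rw [mem_ball_zero_iff] at hz ⊢
  calc ‖f z‖ ≤ a * ‖z‖ := hf z (mem_ball_zero_iff.2 hz)
    _ ≤ 1 * ‖z‖ := by gcongr
    _ < r := by rwa [one_mul]

theorem norm_iterate_le_of_norm_le (hf : ∀ z ∈ ball (0 : E) r, ‖f z‖ ≤ a * ‖z‖) (ha₀ : 0 ≤ a)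
    (ha₁ : a ≤ 1) (n : ℕ) {z : E} (hz : z ∈ ball 0 r) : ‖f^[n] z‖ ≤ a ^ n * ‖z‖ := by
  induction n with
  | zero => simp
  | succ n ih =>
    rw [Function.iterate_succ_apply', pow_succ', mul_assoc]
    exact (hf _ ((mapsTo_ball_of_norm_le hf ha₁).iterate n hz)).trans (by gcongr)

end NormIterate

noncomputable def koenigsApprox (f : ℂ → ℂ) (μ : ℂ) (n : ℕ) (z : ℂ) : ℂ := f^[n] z / μ ^ n

section KoenigsApprox

variable {f : ℂ → ℂ} {μ : ℂ}

theorem koenigsApprox_succ_sub (hμ : μ ≠ 0) (n : ℕ) (z : ℂ) :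
    koenigsApprox f μ (n + 1) z - koenigsApprox f μ n z =
      (f (f^[n] z) - μ * f^[n] z) / μ ^ (n + 1) := by
  rw [koenigsApprox, koenigsApprox, Function.iterate_succ_apply']
  field_simp
  ring

theorem koenigsApprox_apply_map (hμ : μ ≠ 0) (n : ℕ) (z : ℂ) :
    koenigsApprox f μ n (f z) = μ * koenigsApprox f μ (n + 1) z := by
  rw [koenigsApprox, koenigsApprox, ← Function.iterate_succ_apply, pow_succ]
  field_simp

theorem koenigsApprox_apply_zero (hf₀ : f 0 = 0) (n : ℕ) : koenigsApprox f μ n 0 = 0 := by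
  simp [koenigsApprox, Function.iterate_fixed hf₀]

theorem hasDerivAt_koenigsApprox (hf : HasDerivAt f μ 0) (hf₀ : f 0 = 0) (hμ : μ ≠ 0) (n : ℕ) :
    HasDerivAt (koenigsApprox f μ n) 1 0 := by
  have := (HasDerivAt.iterate 0 hf hf₀ n).div_const (μ ^ n)
  rwa [div_self (pow_ne_zero n hμ)] at this

theorem norm_koenigsApprox_succ_sub_le {r C a : ℝ} (hμ : μ ≠ 0)
    (hquad : ∀ z ∈ ball (0 : ℂ) r, ‖f z - μ * z‖ ≤ C * ‖z‖ ^ 2)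
    (hcontr : ∀ z ∈ ball (0 : ℂ) r, ‖f z‖ ≤ a * ‖z‖) (hC : 0 ≤ C) (ha₀ : 0 ≤ a) (ha₁ : a ≤ 1)
    (n : ℕ) {z : ℂ} (hz : z ∈ ball 0 r) :
    ‖koenigsApprox f μ (n + 1) z - koenigsApprox f μ n z‖ ≤
      C * r ^ 2 / ‖μ‖ * (a ^ 2 / ‖μ‖) ^ n := by
  have hzr : ‖z‖ ≤ r := (mem_ball_zero_iff.1 hz).le
  have hw := norm_iterate_le_of_norm_le hcontr ha₀ ha₁ n hz
  rw [koenigsApprox_succ_sub hμ, norm_div, norm_pow]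
  calc ‖f (f^[n] z) - μ * f^[n] z‖ / ‖μ‖ ^ (n + 1)
      ≤ C * (a ^ n * r) ^ 2 / ‖μ‖ ^ (n + 1) := by
        gcongr
        refine (hquad _ ((mapsTo_ball_of_norm_le hcontr ha₁).iterate n hz)).trans ?_
        gcongr
        exact hw.trans (by gcongr)
    _ = C * r ^ 2 / ‖μ‖ * (a ^ 2 / ‖μ‖) ^ n := by
        rw [div_pow, pow_succ]
        field_simp
        ring

end KoenigsApprox

section KoenigsLimit

variable {f h : ℂ → ℂ} {μ : ℂ} {s : Set ℂ}

theorem differentiableOn_koenigsApprox (hf : DifferentiableOn ℂ f s) (hs : MapsTo f s s)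
    (n : ℕ) : DifferentiableOn ℂ (koenigsApprox f μ n) s :=
  (hf.iterate hs n).div_const _

theorem apply_map_eq_mul_of_tendsto_koenigsApprox (hμ : μ ≠ 0) (hs : MapsTo f s s)
    (hlim : ∀ z ∈ s, Tendsto (fun n => koenigsApprox f μ n z) atTop (𝓝 (h z))) {z : ℂ}
    (hz : z ∈ s) : h (f z) = μ * h z := by
  refine tendsto_nhds_unique (hlim _ (hs hz)) ?_
  simp_rw [koenigsApprox_apply_map hμ]
  exact ((hlim z hz).comp (tendsto_add_atTop_nat 1)).const_mul μ

theorem apply_zero_of_tendsto_koenigsApprox (hf₀ : f 0 = 0)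
    (hlim : Tendsto (fun n => koenigsApprox f μ n 0) atTop (𝓝 (h 0))) : h 0 = 0 :=
  tendsto_nhds_unique hlim (by simp only [koenigsApprox_apply_zero hf₀, tendsto_const_nhds])

theorem deriv_zero_of_tendstoLocallyUniformlyOn_koenigsApprox (hf : HasDerivAt f μ 0)
    (hf₀ : f 0 = 0) (hμ : μ ≠ 0) (hs : IsOpen s) (hs₀ : 0 ∈ s) (hfs : DifferentiableOn ℂ f s)
    (hmaps : MapsTo f s s) (hlim : TendstoLocallyUniformlyOn (koenigsApprox f μ) h atTop s) :
    deriv h 0 = 1 := by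
  have hderiv := hlim.deriv (.of_forall (differentiableOn_koenigsApprox hfs hmaps)) hs
  refine tendsto_nhds_unique (hderiv.tendsto_at hs₀) ?_
  simp only [Function.comp_def, (hasDerivAt_koenigsApprox hf hf₀ hμ _).deriv, tendsto_const_nhds]

end KoenigsLimit

theorem exists_lt_and_lt_one_and_sq_lt {m : ℝ} (hm₀ : 0 < m) (hm₁ : m < 1) :
    ∃ a, m < a ∧ a < 1 ∧ a ^ 2 < m := by
  have hsqrt : m < √m := (Real.lt_sqrt hm₀.le).2 (by nlinarith)
  obtain ⟨a, hma, ha⟩ := exists_between (lt_min hm₁ hsqrt)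
  exact ⟨a, hma, ha.trans_le (min_le_left _ _),
    (Real.lt_sqrt (hm₀.trans hma).le).1 (ha.trans_le (min_le_right _ _))⟩

theorem norm_le_of_norm_sub_mul_le {μ z w : ℂ} {C a : ℝ} (hw : ‖w - μ * z‖ ≤ C * ‖z‖ ^ 2)
    (hz : C * ‖z‖ ≤ a - ‖μ‖) : ‖w‖ ≤ a * ‖z‖ :=
  calc ‖w‖ ≤ ‖w - μ * z‖ + ‖μ * z‖ := norm_le_norm_sub_add _ _
    _ ≤ C * ‖z‖ ^ 2 + ‖μ‖ * ‖z‖ := by rw [norm_mul]; gcongr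
    _ ≤ a * ‖z‖ := by nlinarith [norm_nonneg z]

theorem tendstoUniformlyOn_koenigsApprox {f : ℂ → ℂ} {μ : ℂ} {r C a : ℝ} (hμ : μ ≠ 0)
    (hquad : ∀ z ∈ ball (0 : ℂ) r, ‖f z - μ * z‖ ≤ C * ‖z‖ ^ 2)
    (hcontr : ∀ z ∈ ball (0 : ℂ) r, ‖f z‖ ≤ a * ‖z‖) (hC : 0 ≤ C) (ha₀ : 0 ≤ a) (ha₁ : a ≤ 1)
    (ha₂ : a ^ 2 < ‖μ‖) :
    ∃ h, TendstoUniformlyOn (koenigsApprox f μ) h atTop (ball 0 r) := by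
  have hsum : Summable fun n => C * r ^ 2 / ‖μ‖ * (a ^ 2 / ‖μ‖) ^ n :=
    (summable_geometric_of_lt_one (by positivity)
      ((div_lt_one (norm_pos_iff.2 hμ)).2 ha₂)).mul_left _
  exact ⟨_, tendstoUniformlyOn_of_norm_sub_le hsum fun n z hz =>
    norm_koenigsApprox_succ_sub_le hμ hquad hcontr hC ha₀ ha₁ n hz⟩

theorem koenigs_linearization_of_norm_lt_one {f : ℂ → ℂ} (hf : AnalyticAt ℂ f 0) (hf₀ : f 0 = 0)
    (hμ : deriv f 0 ≠ 0) (hμ₁ : ‖deriv f 0‖ < 1) :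
    ∃ h : ℂ → ℂ, AnalyticAt ℂ h 0 ∧ h 0 = 0 ∧ deriv h 0 = 1 ∧
      ∀ᶠ z in 𝓝 0, h (f z) = deriv f 0 * h z := by
  set μ := deriv f 0
  obtain ⟨a, hμa, ha₁, ha₂⟩ := exists_lt_and_lt_one_and_sq_lt (norm_pos_iff.2 hμ) hμ₁
  obtain ⟨C, hC, hCquad⟩ := hf.isBigO_sub_sub_smul_deriv.exists_pos
  have hquad : ∀ᶠ z in 𝓝 0, ‖f z - μ * z‖ ≤ C * ‖z‖ ^ 2 := by
    simpa [hf₀, mul_comm μ] using hCquad.bound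
  have hsmall : ∀ᶠ z in 𝓝 (0 : ℂ), C * ‖z‖ ≤ a - ‖μ‖ := by
    have : Tendsto (fun z : ℂ => C * ‖z‖) (𝓝 0) (𝓝 0) := by
      simpa using tendsto_norm_zero.const_mul C
    exact this.eventually (ge_mem_nhds (sub_pos.2 hμa))
  obtain ⟨r, hr, hball⟩ :=
    eventually_nhds_iff_ball.1 ((hquad.and hsmall).and hf.eventually_analyticAt)
  have hcontr : ∀ z ∈ ball 0 r, ‖f z‖ ≤ a * ‖z‖ := fun z hz =>
    norm_le_of_norm_sub_mul_le (hball z hz).1.1 (hball z hz).1.2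
  have hmaps := mapsTo_ball_of_norm_le hcontr ha₁.le
  have hfs : DifferentiableOn ℂ f (ball 0 r) := fun z hz =>
    (hball z hz).2.differentiableAt.differentiableWithinAt
  obtain ⟨h, hlim⟩ := tendstoUniformlyOn_koenigsApprox hμ (fun z hz => (hball z hz).1.1) hcontr
    hC.le ((norm_nonneg μ).trans hμa.le) ha₁.le ha₂
  have hloc := hlim.tendstoLocallyUniformlyOn
  have h₀ : (0 : ℂ) ∈ ball 0 r := mem_ball_self hr
  refine ⟨h, ?_, apply_zero_of_tendsto_koenigsApprox hf₀ (hlim.tendsto_at h₀),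
    deriv_zero_of_tendstoLocallyUniformlyOn_koenigsApprox hf.differentiableAt.hasDerivAt hf₀ hμ
      isOpen_ball h₀ hfs hmaps hloc, ?_⟩
  · exact (hloc.differentiableOn (.of_forall (differentiableOn_koenigsApprox hfs hmaps))
      isOpen_ball).analyticAt (ball_mem_nhds 0 hr)
  · filter_upwards [ball_mem_nhds 0 hr] with z hz using
      apply_map_eq_mul_of_tendsto_koenigsApprox hμ hmaps (fun z hz => hlim.tendsto_at hz) hz

theorem AnalyticAt.exists_analyticAt_leftInverse {𝕜 : Type*} [NontriviallyNormedField 𝕜]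
    [CompleteSpace 𝕜] [CharZero 𝕜] {f : 𝕜 → 𝕜} {x : 𝕜} (hf : AnalyticAt 𝕜 f x)
    (hf' : deriv f x ≠ 0) :
    ∃ g : 𝕜 → 𝕜, AnalyticAt 𝕜 g (f x) ∧ g (f x) = x ∧ deriv g (f x) = (deriv f x)⁻¹ ∧
      ∀ᶠ z in 𝓝 x, g (f z) = z :=
  ⟨_, hf.analyticAt_localInverse hf', HasStrictFDerivAt.localInverse_apply_image _,
    (hf.hasStrictDerivAt.to_localInverse hf').hasDerivAt.deriv,
    hf.hasStrictDerivAt.eventually_left_inverse hf'⟩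

/-- Koenigs' theorem: every germ of holomorphic diffeomorphism `f` of `(ℂ,0)` with
`|f'(0)| ≠ 1` is analytically linearizable by a tangent-to-identity coordinate:
there is `h` analytic at `0` with `h 0 = 0`, `h'(0) = 1` and
`h ∘ f = f'(0) · h` near `0`. -/
theorem koenigs_linearization
    (f : ℂ → ℂ) (hf : AnalyticAt ℂ f 0) (hf0 : f 0 = 0)
    (hne : deriv f 0 ≠ 0) (hhyp : ‖deriv f 0‖ ≠ 1) :
    ∃ h : ℂ → ℂ, AnalyticAt ℂ h 0 ∧ h 0 = 0 ∧ deriv h 0 = 1 ∧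
      ∀ᶠ z in nhds (0 : ℂ), h (f z) = deriv f 0 * h z := by
  rcases hhyp.lt_or_gt with hlt | hgt
  · exact koenigs_linearization_of_norm_lt_one hf hf0 hne hlt
  obtain ⟨g, hg, hg₀, hg', hgf⟩ := hf.exists_analyticAt_leftInverse hne
  rw [hf0] at hg hg₀ hg'
  obtain ⟨h, hh, hh₀, hh', hhg⟩ := koenigs_linearization_of_norm_lt_one hg hg₀
    (by simpa [hg'] using hne) (by simpa [hg'] using inv_lt_one_of_one_lt₀ hgt)
  refine ⟨h, hh, hh₀, hh', ?_⟩
  have hf_tendsto : Tendsto f (𝓝 0) (𝓝 0) := by simpa only [hf0] using hf.continuousAt.tendsto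
  filter_upwards [hgf, hf_tendsto.eventually hhg] with z hgfz hhgfz
  rw [hgfz, hg'] at hhgfz
  rw [hhgfz, mul_inv_cancel_left₀ hne]
end
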